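/- Let V be a finite-dimensional real inner product space and φ an alternating p-form on V. An orthonormal p-tuple ξ = (e₁,…,e_p) is φ-critical if and only if λ_φ(A)(e₁,…,e_p) = 0 for every skew-adjoint endomorphism A of V (i.e. every A with ⟨A v, w⟩ = −⟨v, A w⟩ for all v, w ∈ V). (Remark A.7, equation (A.4)) -/

import Mathlib

open scoped RealInnerProductSpace

noncomputable section

variable {V : Type*} [NormedAddCommGroup V] [InnerProductSpace ℝ V] [FiniteDimensional ℝ V]

/-- `λ_φ(A)`, the action of the endomorphism `A` on the alternating `p`-form `φ` as a
derivation: `λ_φ(A)(v₁,…,v_p) = Σ_k φ(v₁,…,A v_k,…,v_p)`. -/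
def lambdaForm {p : ℕ} (φ : V [⋀^Fin p]→ₗ[ℝ] ℝ) (A : V →ₗ[ℝ] V) (v : Fin p → V) : ℝ :=
  ∑ k, φ (Function.update v k (A (v k)))

/-- An orthonormal `p`-tuple `ξ = (e₁,…,e_p)` is `φ`-critical if `φ` vanishes on all the
first cousins of `ξ`, i.e. `φ(e₁,…,e_{k−1}, b, e_{k+1},…,e_p) = 0` for every index `k`
and every `b` orthogonal to `span{e₁,…,e_p}`. -/
def IsPhiCritical {p : ℕ} (φ : V [⋀^Fin p]→ₗ[ℝ] ℝ) (e : Fin p → V) : Prop :=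
  ∀ (k : Fin p) (b : V), b ∈ (Submodule.span ℝ (Set.range e))ᗮ →
    φ (Function.update e k b) = 0

/-!
Write `A eₖ = bₖ + Σⱼ ⟪eⱼ, A eₖ⟫ eⱼ` with `bₖ` orthogonal to the `eⱼ`. Since `φ` is
alternating, `φ(e₁,…,A eₖ,…,e_p) = φ(e₁,…,bₖ,…,e_p) + ⟪eₖ, A eₖ⟫ φ(e)`, and for skew `A` the
last coefficient vanishes; so criticality forces `λ_φ(A)(e) = 0`. Conversely, for `b`
orthogonal to the `eⱼ`, the skew operator `v ↦ ⟪eₖ, v⟫ b - ⟪b, v⟫ eₖ` sends `eₖ` to `b` and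
kills the other `eⱼ`, so `λ_φ(A)(e) = φ(e₁,…,b,…,e_p)`.
-/

open Function InnerProductSpace

section InnerProduct

variable {𝕜 E ι : Type*} [RCLike 𝕜] [NormedAddCommGroup E] [InnerProductSpace 𝕜 E]

theorem Submodule.mem_orthogonal_span_range_iff (v : ι → E) (b : E) :
    b ∈ (span 𝕜 (Set.range v))ᗮ ↔ ∀ i, ⟪v i, b⟫_𝕜 = 0 := by
  rw [← span_singleton_le_iff_mem, ← isOrtho_iff_le, isOrtho_span]
  simp [inner_eq_zero_symm]

theorem Orthonormal.sub_sum_inner_smul_mem_orthogonal [Fintype ι] {v : ι → E}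
    (hv : Orthonormal 𝕜 v) (x : E) :
    x - ∑ i, ⟪v i, x⟫_𝕜 • v i ∈ (Submodule.span 𝕜 (Set.range v))ᗮ := by
  rw [Submodule.mem_orthogonal_span_range_iff]
  intro i
  rw [inner_sub_right, hv.inner_right_fintype, sub_self]

theorem InnerProductSpace.inner_rankOne_sub_rankOne_apply (x y v w : E) :
    ⟪(rankOne 𝕜 x y - rankOne 𝕜 y x) v, w⟫_𝕜 = -⟪v, (rankOne 𝕜 x y - rankOne 𝕜 y x) w⟫_𝕜 := by
  simp only [sub_apply, rankOne_apply, inner_sub_left, inner_sub_right, inner_smul_left,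
    inner_smul_right, inner_conj_symm]
  ring

end InnerProduct

theorem AlternatingMap.map_update_sum_smul {R M N ι : Type*} [CommSemiring R] [AddCommMonoid M]
    [Module R M] [AddCommMonoid N] [Module R N] [Fintype ι] [DecidableEq ι]
    (f : M [⋀^ι]→ₗ[R] N) (v : ι → M) (i : ι) (c : ι → R) :
    f (update v i (∑ j, c j • v j)) = c i • f v := by
  rw [f.map_update_sum, Finset.sum_eq_single i]
  · rw [f.map_update_smul, update_eq_self]
  · intro j _ hji
    rw [f.map_update_smul, f.map_update_self v hji.symm, smul_zero]
  · simp

section Forms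

variable {E : Type*} [NormedAddCommGroup E] [InnerProductSpace ℝ E] {p : ℕ}

theorem IsPhiCritical.map_update_eq {φ : E [⋀^Fin p]→ₗ[ℝ] ℝ} {e : Fin p → E}
    (hcrit : IsPhiCritical φ e) (he : Orthonormal ℝ e) (k : Fin p) (v : E) :
    φ (update e k v) = ⟪e k, v⟫ * φ e := by
  conv_lhs => rw [← sub_add_cancel v (∑ j, ⟪e j, v⟫ • e j)]
  rw [φ.map_update_add, hcrit k _ (he.sub_sum_inner_smul_mem_orthogonal v), zero_add,
    φ.map_update_sum_smul, smul_eq_mul]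

theorem lambdaForm_eq_of_forall_ne (φ : E [⋀^Fin p]→ₗ[ℝ] ℝ) (A : E →ₗ[ℝ] E)
    (v : Fin p → E) (k : Fin p) (hA : ∀ j ≠ k, A (v j) = 0) :
    lambdaForm φ A v = φ (update v k (A (v k))) := by
  refine Finset.sum_eq_single k (fun j _ hjk => ?_) (by simp)
  rw [hA j hjk, φ.map_update_zero]

end Forms

theorem isPhiCritical_iff_lambdaForm_skew_eq_zero {p : ℕ}
    (φ : V [⋀^Fin p]→ₗ[ℝ] ℝ)
    (e : Fin p → V) (he : Orthonormal ℝ e) :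
    IsPhiCritical φ e ↔
      ∀ A : V →ₗ[ℝ] V, (∀ v w : V, ⟪A v, w⟫ = -⟪v, A w⟫) → lambdaForm φ A e = 0 := by
  constructor
  · intro hcrit A hA
    have hdiag : ∀ v, ⟪v, A v⟫ = 0 := fun v => by
      linarith [hA v v, real_inner_comm v (A v)]
    simp [lambdaForm, hcrit.map_update_eq he, hdiag]
  · intro h k b hb
    have hbe : ∀ j, ⟪b, e j⟫ = 0 := fun j =>
      inner_eq_zero_symm.1 ((Submodule.mem_orthogonal_span_range_iff e b).1 hb j)
    let A : V →L[ℝ] V := rankOne ℝ b (e k) - rankOne ℝ (e k) b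
    have hAe : ∀ j, A (e j) = ⟪e k, e j⟫ • b := fun j => by simp [A, hbe]
    have hAk : A (e k) = b := by simp [hAe, he.1 k]
    have hAj : ∀ j ≠ k, A (e j) = 0 := fun j hjk => by simp [hAe, he.2 hjk.symm]
    have hzero := h A (InnerProductSpace.inner_rankOne_sub_rankOne_apply b (e k))
    rwa [lambdaForm_eq_of_forall_ne φ A e k hAj, ContinuousLinearMap.coe_coe, hAk] at hzero
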